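/- Let M and N be real numbers with 0 < M ≤ N, let K be a positive integer, and let α be a real number with 1 ≤ α < 2. If N/M ≥ 1/(2 − α), then (α·N/M − 1)·(1 − (1 − M/(α·N))^K) ≤ 2·(N/M − 1)·(1 − (1 − M/N)^K). -/

import Mathlib

lemma one_sub_one_sub_pow_nonneg {x : ℝ} (hx0 : 0 ≤ x) (hx1 : x ≤ 1) (K : ℕ) :
    0 ≤ 1 - (1 - x) ^ K :=
  sub_nonneg.mpr (pow_le_one₀ (by linarith) (by linarith))

lemma one_sub_one_sub_pow_le_of_le {x y : ℝ} (hxy : x ≤ y) (hy : y ≤ 1) (K : ℕ) :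
    1 - (1 - x) ^ K ≤ 1 - (1 - y) ^ K := by
  gcongr

lemma mul_sub_one_le_two_mul_sub_one {α t : ℝ} (hα : α < 2) (ht : 1 / (2 - α) ≤ t) :
    α * t - 1 ≤ 2 * (t - 1) := by
  have : 1 ≤ (2 - α) * t := by
    rwa [div_le_iff₀' (by linarith)] at ht
  linarith

theorem stmt_5_general (M N α : ℝ) (K : ℕ)
    (hM : 0 < M) (hMN : M ≤ N) (hα1 : 1 ≤ α) (hα2 : α < 2)
    (hcase : N / M ≥ 1 / (2 - α)) :
    (α * N / M - 1) * (1 - (1 - M / (α * N)) ^ K)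
      ≤ 2 * ((N / M - 1) * (1 - (1 - M / N) ^ K)) := by
  have hN : 0 < N := hM.trans_le hMN
  have hdiv_le_one : M / N ≤ 1 := (div_le_one hN).mpr hMN
  have hdiv_le : M / (α * N) ≤ M / N :=
    div_le_div_of_nonneg_left hM.le hN (le_mul_of_one_le_left hN.le hα1)
  have hratio : 1 ≤ N / M := (one_le_div hM).mpr hMN
  rw [← mul_assoc, mul_div_assoc]
  apply mul_le_mul (mul_sub_one_le_two_mul_sub_one hα2 hcase)
  · exact one_sub_one_sub_pow_le_of_le hdiv_le hdiv_le_one K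
  · exact one_sub_one_sub_pow_nonneg (by positivity) (hdiv_le.trans hdiv_le_one) K
  · linarith

/-- Appendix B, first case: if `N/M ≥ 1/(2 − α)` then
`(α·N/M − 1)·(1 − (1 − M/(α·N))^K) ≤ 2·(N/M − 1)·(1 − (1 − M/N)^K)`. -/
theorem stmt_5 (M N α : ℝ) (K : ℕ)
    (hM : 0 < M) (hMN : M ≤ N) (hK : 0 < K) (hα1 : 1 ≤ α) (hα2 : α < 2)
    (hcase : N / M ≥ 1 / (2 - α)) :
    (α * N / M - 1) * (1 - (1 - M / (α * N)) ^ K)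
      ≤ 2 * ((N / M - 1) * (1 - (1 - M / N) ^ K)) :=
  stmt_5_general M N α K hM hMN hα1 hα2 hcase
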